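/- (Relaxed Regularization Path Bound, RRPB) Fix γ ∈ (0,1], a finite index set T, symmetric matrices H_t ∈ ℝ^{d×d} (t ∈ T), and λ₀, λ₁ > 0. Let M₀* be optimal for λ₀ and M₁* be optimal for λ₁ (i.e., M_i* ⪰ O minimizes P_{λᵢ} over positive semi-definite matrices), and let M₀ be a symmetric matrix with ‖M₀* − M₀‖_F ≤ ε for some ε ≥ 0. Then ‖M₁* − ((λ₀+λ₁)/(2λ₁))·M₀‖_F ≤ (|λ₀−λ₁|/(2λ₁))·‖M₀‖_F + ((|λ₀−λ₁| + λ₀ + λ₁)/(2λ₁))·ε. -/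

import Mathlib

open scoped BigOperators
open scoped Matrix

/-- Frobenius inner product ⟨A,B⟩ = tr(Aᵀ B). -/
noncomputable def frob {d : ℕ} (A B : Matrix (Fin d) (Fin d) ℝ) : ℝ :=
  Matrix.trace (Aᵀ * B)

/-- Frobenius norm ‖A‖_F = √⟨A,A⟩. -/
noncomputable def frobNorm {d : ℕ} (A : Matrix (Fin d) (Fin d) ℝ) : ℝ :=
  Real.sqrt (frob A A)

/-- Smoothed hinge loss ℓ_γ. -/
noncomputable def shinge (γ x : ℝ) : ℝ :=
  if 1 < x then 0 else if 1 - γ ≤ x then (1 - x) ^ 2 / (2 * γ) else 1 - x - γ / 2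

/-- Derivative of the smoothed hinge loss ℓ_γ'. -/
noncomputable def shinge' (γ x : ℝ) : ℝ :=
  if 1 < x then 0 else if 1 - γ ≤ x then -(1 - x) / γ else -1

/-- Primal objective P_λ(M) = Σ_t ℓ_γ(⟨M,H_t⟩) + (λ/2)‖M‖_F². -/
noncomputable def Pobj {d : ℕ} {ι : Type*} (γ lam : ℝ) (T : Finset ι)
    (H : ι → Matrix (Fin d) (Fin d) ℝ) (M : Matrix (Fin d) (Fin d) ℝ) : ℝ :=
  (∑ t ∈ T, shinge γ (frob M (H t))) + lam / 2 * frobNorm M ^ 2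

/-- Gradient ∇P_λ(M) = Σ_t ℓ_γ'(⟨M,H_t⟩) H_t + λ M. -/
noncomputable def gradP {d : ℕ} {ι : Type*} (γ lam : ℝ) (T : Finset ι)
    (H : ι → Matrix (Fin d) (Fin d) ℝ) (M : Matrix (Fin d) (Fin d) ℝ) :
    Matrix (Fin d) (Fin d) ℝ :=
  (∑ t ∈ T, shinge' γ (frob M (H t)) • H t) + lam • M

/-!
Since `ℓ_γ` is convex (it lies above its tangent lines `x ↦ ℓ_γ(x₀) + ℓ_γ'(x₀) (x - x₀)`),
`P_λ` is `λ`-strongly convex, so a minimizer `M*` over the convex cone of PSD matrices satisfies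
the quadratic growth bound `P_λ(M*) + λ/2 ‖M - M*‖² ≤ P_λ(M)` for all PSD `M`. Adding this for
`(λ₀, M₀*)` at `M₁*` and for `(λ₁, M₁*)` at `M₀*` cancels the loss terms and leaves
`λ₀ ‖M₀*‖² + λ₁ ‖M₁*‖² ≤ (λ₀ + λ₁) ⟨M₀*, M₁*⟩`; completing the square, this says that `M₁*` lies
in the ball of centre `(λ₀ + λ₁)/(2λ₁) • M₀*` and radius `|λ₀ - λ₁|/(2λ₁) ‖M₀*‖`. The triangle
inequality then replaces `M₀*` by its approximation `M₀`. Flattening matrices into Euclidean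
vectors turns `⟨·,·⟩` and `‖·‖_F` into an inner product and its norm, so all of this happens in a
general real inner product space.
-/

open Set Filter Topology
open scoped InnerProductSpace

section InnerProductSpace

variable {E : Type*} [NormedAddCommGroup E] [InnerProductSpace ℝ E]

lemma StrongConvexOn.add_sq_norm_sub_le_of_isMinOn {s : Set E} {f : E → ℝ} {m : ℝ} {x y : E}
    (hf : StrongConvexOn s m f) (hmin : IsMinOn f s x) (hx : x ∈ s) (hy : y ∈ s) :
    f x + m / 2 * ‖y - x‖ ^ 2 ≤ f y := by
  have hsegment : ∀ t ∈ Ioc (0 : ℝ) 1, f x + m / 2 * (1 - t) * ‖y - x‖ ^ 2 ≤ f y := by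
    rintro t ⟨ht0, ht1⟩
    have hle : f x ≤ f (t • y + (1 - t) • x) :=
      hmin (hf.1 hy hx ht0.le (sub_nonneg.2 ht1) (add_sub_cancel t 1))
    have hconv := hf.2 hy hx ht0.le (sub_nonneg.2 ht1) (add_sub_cancel t 1)
    simp only [smul_eq_mul] at hconv
    refine le_of_mul_le_mul_left ?_ ht0
    linear_combination hle + hconv
  have hlim : Tendsto (fun t => f x + m / 2 * (1 - t) * ‖y - x‖ ^ 2) (𝓝[>] 0)
      (𝓝 (f x + m / 2 * ‖y - x‖ ^ 2)) := by
    have : Continuous fun t : ℝ => f x + m / 2 * (1 - t) * ‖y - x‖ ^ 2 := by fun_prop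
    simpa using this.continuousWithinAt.tendsto (x := 0) (s := Ioi 0)
  exact le_of_tendsto hlim (eventually_of_mem (Ioc_mem_nhdsGT zero_lt_one) hsegment)

lemma ConvexOn.strongConvexOn_add_sq_norm {s : Set E} {f : E → ℝ} (hf : ConvexOn ℝ s f)
    (m : ℝ) : StrongConvexOn s m fun x => f x + m / 2 * ‖x‖ ^ 2 :=
  strongConvexOn_iff_convex.2 (by simpa using hf)

lemma norm_sub_smul_le_of_mul_sq_norm_add_mul_sq_norm_le_inner {m₀ m₁ : ℝ} {x y : E}
    (hm₁ : 0 < m₁) (h : m₀ * ‖x‖ ^ 2 + m₁ * ‖y‖ ^ 2 ≤ (m₀ + m₁) * ⟪x, y⟫_ℝ) :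
    ‖y - ((m₀ + m₁) / (2 * m₁)) • x‖ ≤ |m₀ - m₁| / (2 * m₁) * ‖x‖ := by
  refine (pow_le_pow_iff_left₀ (norm_nonneg _) (by positivity) two_ne_zero).1 ?_
  rw [norm_sub_sq_real, norm_smul, inner_smul_right, real_inner_comm, mul_pow, mul_pow,
    Real.norm_eq_abs, sq_abs, div_pow, div_pow, sq_abs]
  field_simp
  linear_combination 4 * m₁ * h

theorem norm_sub_smul_le_of_isMinOn_add_sq_norm {s : Set E} {L : E → ℝ} {m₀ m₁ : ℝ}
    {x₀ x₁ : E} (hL : ConvexOn ℝ s L) (hm₁ : 0 < m₁) (hx₀ : x₀ ∈ s) (hx₁ : x₁ ∈ s)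
    (hmin₀ : IsMinOn (fun x => L x + m₀ / 2 * ‖x‖ ^ 2) s x₀)
    (hmin₁ : IsMinOn (fun x => L x + m₁ / 2 * ‖x‖ ^ 2) s x₁) :
    ‖x₁ - ((m₀ + m₁) / (2 * m₁)) • x₀‖ ≤ |m₀ - m₁| / (2 * m₁) * ‖x₀‖ := by
  have hgrowth₀ := (hL.strongConvexOn_add_sq_norm m₀).add_sq_norm_sub_le_of_isMinOn hmin₀ hx₀ hx₁
  have hgrowth₁ := (hL.strongConvexOn_add_sq_norm m₁).add_sq_norm_sub_le_of_isMinOn hmin₁ hx₁ hx₀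
  refine norm_sub_smul_le_of_mul_sq_norm_add_mul_sq_norm_le_inner hm₁ ?_
  rw [norm_sub_rev, norm_sub_sq_real] at hgrowth₀ hgrowth₁
  rw [real_inner_comm x₀ x₁] at hgrowth₁
  linear_combination hgrowth₀ + hgrowth₁

lemma norm_sub_smul_le_of_norm_sub_le {F : Type*} [SeminormedAddCommGroup F] [NormedSpace ℝ F]
    {x y z : F} {c r ε : ℝ} (hc : 0 ≤ c) (hr : 0 ≤ r) (hy : ‖y - c • x‖ ≤ r * ‖x‖)
    (hz : ‖x - z‖ ≤ ε) : ‖y - c • z‖ ≤ r * ‖z‖ + (r + c) * ε := by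
  have hx : ‖x‖ ≤ ‖z‖ + ε := (norm_le_norm_add_norm_sub' x z).trans (by gcongr)
  calc ‖y - c • z‖ = ‖(y - c • x) + c • (x - z)‖ := by rw [smul_sub]; abel_nf
    _ ≤ ‖y - c • x‖ + c * ‖x - z‖ := by
      grw [norm_add_le, norm_smul, Real.norm_of_nonneg hc]
    _ ≤ r * (‖z‖ + ε) + c * ε := by grw [hy, hx, hz]
    _ = r * ‖z‖ + (r + c) * ε := by ring

end InnerProductSpace

lemma convexOn_univ_of_le_add_mul {f g : ℝ → ℝ} (h : ∀ x y, f x + g x * (y - x) ≤ f y) :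
    ConvexOn ℝ univ f := by
  refine ⟨convex_univ, fun a _ b _ s u hs hu hsu => ?_⟩
  set z := s • a + u • b
  have hz : s * (a - z) + u * (b - z) = 0 := by
    simp only [z, smul_eq_mul]; linear_combination (-(s * a + u * b)) * hsu
  simp only [smul_eq_mul]
  linear_combination s * h z a + u * h z b - g z * hz - f z * hsu

section SmoothHinge

variable {γ : ℝ}

lemma shinge'_mem_Icc (hγ : 0 < γ) (x : ℝ) : shinge' γ x ∈ Icc (-1) 0 := by
  unfold shinge'
  split_ifs with h₁ h₂
  · simp
  · constructor
    · rw [le_div_iff₀ hγ]; linarith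
    · exact div_nonpos_of_nonpos_of_nonneg (by linarith) hγ.le
  · simp

lemma shinge_eq_shinge'_mul (hγ : 0 < γ) (x : ℝ) :
    shinge γ x = shinge' γ x * (x - 1) - γ * shinge' γ x ^ 2 / 2 := by
  unfold shinge shinge'
  split_ifs
  · simp
  · field_simp; ring
  · ring

lemma mul_sub_le_shinge (hγ : 0 < γ) {a : ℝ} (ha : a ∈ Icc (-1) 0) (y : ℝ) :
    a * (y - 1) - γ * a ^ 2 / 2 ≤ shinge γ y := by
  obtain ⟨ha₁, ha₀⟩ := ha
  unfold shinge
  split_ifs with h₁ h₂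
  · nlinarith
  · rw [le_div_iff₀ (by positivity)]
    nlinarith [sq_nonneg (1 - y + γ * a)]
  · nlinarith [mul_nonneg (neg_le_iff_add_nonneg.1 ha₁) (by linarith : (0 : ℝ) ≤ 1 - y - γ),
      mul_nonneg hγ.le (sq_nonneg (1 + a))]

lemma shinge_add_shinge'_mul_le (hγ : 0 < γ) (x y : ℝ) :
    shinge γ x + shinge' γ x * (y - x) ≤ shinge γ y := by
  have h := mul_sub_le_shinge hγ (shinge'_mem_Icc hγ x) y
  rw [shinge_eq_shinge'_mul hγ x]
  linarith

lemma convexOn_shinge (hγ : 0 < γ) : ConvexOn ℝ univ (shinge γ) :=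
  convexOn_univ_of_le_add_mul (shinge_add_shinge'_mul_le hγ)

end SmoothHinge

section Frobenius

variable {m n : Type*}

def frobVec : Matrix m n ℝ →ₗ[ℝ] EuclideanSpace ℝ (m × n) where
  toFun A := WithLp.toLp 2 fun p => A p.1 p.2
  map_add' _ _ := rfl
  map_smul' _ _ := rfl

@[simp]
lemma frobVec_apply (A : Matrix m n ℝ) (p : m × n) : frobVec A p = A p.1 p.2 := rfl

variable {d : ℕ}

lemma frob_eq_inner (A B : Matrix (Fin d) (Fin d) ℝ) : frob A B = ⟪frobVec A, frobVec B⟫_ℝ := by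
  simp [frob, Matrix.trace, Matrix.mul_apply, PiLp.inner_apply, Fintype.sum_prod_type, mul_comm]
  exact Finset.sum_comm

lemma frobNorm_eq_norm (A : Matrix (Fin d) (Fin d) ℝ) : frobNorm A = ‖frobVec A‖ := by
  rw [frobNorm, frob_eq_inner, real_inner_self_eq_norm_sq, Real.sqrt_sq (norm_nonneg _)]

lemma convex_posSemidef [Fintype n] : Convex ℝ {M : Matrix n n ℝ | M.PosSemidef} :=
  fun _ hA _ hB _ _ ha hb _ => (Matrix.PosSemidef.smul hA ha).add (hB.smul hb)

end Frobenius

section SmoothHingeLoss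

variable {E ι : Type*} [NormedAddCommGroup E] [InnerProductSpace ℝ E]

noncomputable def smoothHingeSum (γ : ℝ) (T : Finset ι) (h : ι → E) (x : E) : ℝ :=
  ∑ t ∈ T, shinge γ ⟪x, h t⟫_ℝ

lemma convexOn_smoothHingeSum {γ : ℝ} (hγ : 0 < γ) (T : Finset ι) (h : ι → E) :
    ConvexOn ℝ univ (smoothHingeSum γ T h) := by
  refine ⟨convex_univ, fun x _ y _ a b ha hb hab => ?_⟩
  simp only [smoothHingeSum, smul_eq_mul, Finset.mul_sum, ← Finset.sum_add_distrib]
  refine Finset.sum_le_sum fun t _ => ?_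
  rw [inner_add_left, real_inner_smul_left, real_inner_smul_left]
  exact (convexOn_shinge hγ).2 (mem_univ _) (mem_univ _) ha hb hab

variable {d : ℕ} {γ lam : ℝ} {T : Finset ι} {H : ι → Matrix (Fin d) (Fin d) ℝ}

lemma Pobj_eq (M : Matrix (Fin d) (Fin d) ℝ) :
    Pobj γ lam T H M =
      smoothHingeSum γ T (frobVec ∘ H) (frobVec M) + lam / 2 * ‖frobVec M‖ ^ 2 := by
  simp [Pobj, smoothHingeSum, frob_eq_inner, frobNorm_eq_norm]

lemma isMinOn_frobVec_of_forall_Pobj_le {Mstar : Matrix (Fin d) (Fin d) ℝ}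
    (hopt : ∀ M' : Matrix (Fin d) (Fin d) ℝ, M'.PosSemidef →
      Pobj γ lam T H Mstar ≤ Pobj γ lam T H M') :
    IsMinOn (fun x => smoothHingeSum γ T (frobVec ∘ H) x + lam / 2 * ‖x‖ ^ 2)
      (frobVec '' {M | M.PosSemidef}) (frobVec Mstar) := by
  refine isMinOn_iff.2 ?_
  rintro _ ⟨M', hM', rfl⟩
  simpa only [Pobj_eq] using hopt M' hM'

end SmoothHingeLoss

theorem relaxed_regularization_path_bound_general {d : ℕ} {ι : Type*} (γ lam0 lam1 : ℝ)
    (hγ : 0 < γ) (hlam0 : 0 < lam0) (hlam1 : 0 < lam1)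
    (T : Finset ι) (H : ι → Matrix (Fin d) (Fin d) ℝ)
    (M0star M1star M0 : Matrix (Fin d) (Fin d) ℝ) (ε : ℝ)
    (hM0star : M0star.PosSemidef)
    (hopt0 : ∀ M' : Matrix (Fin d) (Fin d) ℝ, M'.PosSemidef →
      Pobj γ lam0 T H M0star ≤ Pobj γ lam0 T H M')
    (hM1star : M1star.PosSemidef)
    (hopt1 : ∀ M' : Matrix (Fin d) (Fin d) ℝ, M'.PosSemidef →
      Pobj γ lam1 T H M1star ≤ Pobj γ lam1 T H M')
    (happrox : frobNorm (M0star - M0) ≤ ε) :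
    frobNorm (M1star - ((lam0 + lam1) / (2 * lam1)) • M0) ≤
      |lam0 - lam1| / (2 * lam1) * frobNorm M0 +
        (|lam0 - lam1| + lam0 + lam1) / (2 * lam1) * ε := by
  set K := frobVec '' {M : Matrix (Fin d) (Fin d) ℝ | M.PosSemidef}
  have hL : ConvexOn ℝ K (smoothHingeSum γ T (frobVec ∘ H)) :=
    (convexOn_smoothHingeSum hγ T _).subset (subset_univ K) (convex_posSemidef.linear_image _)
  have hpath := norm_sub_smul_le_of_isMinOn_add_sq_norm hL hlam1 (mem_image_of_mem _ hM0star)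
    (mem_image_of_mem _ hM1star) (isMinOn_frobVec_of_forall_Pobj_le hopt0)
    (isMinOn_frobVec_of_forall_Pobj_le hopt1)
  rw [frobNorm_eq_norm, map_sub] at happrox
  rw [frobNorm_eq_norm, frobNorm_eq_norm, map_sub, map_smul]
  convert norm_sub_smul_le_of_norm_sub_le (by positivity) (by positivity) hpath happrox using 2
  ring

/-- Relaxed Regularization Path Bound (RRPB). -/
theorem relaxed_regularization_path_bound {d : ℕ} {ι : Type*} (γ lam0 lam1 : ℝ)
    (hγ : 0 < γ) (hγ1 : γ ≤ 1) (hlam0 : 0 < lam0) (hlam1 : 0 < lam1)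
    (T : Finset ι) (H : ι → Matrix (Fin d) (Fin d) ℝ)
    (hH : ∀ t ∈ T, (H t).IsSymm)
    (M0star M1star M0 : Matrix (Fin d) (Fin d) ℝ) (ε : ℝ) (hε : 0 ≤ ε)
    (hM0star : M0star.PosSemidef)
    (hopt0 : ∀ M' : Matrix (Fin d) (Fin d) ℝ, M'.PosSemidef →
      Pobj γ lam0 T H M0star ≤ Pobj γ lam0 T H M')
    (hM1star : M1star.PosSemidef)
    (hopt1 : ∀ M' : Matrix (Fin d) (Fin d) ℝ, M'.PosSemidef →
      Pobj γ lam1 T H M1star ≤ Pobj γ lam1 T H M')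
    (hM0 : M0.IsSymm) (happrox : frobNorm (M0star - M0) ≤ ε) :
    frobNorm (M1star - ((lam0 + lam1) / (2 * lam1)) • M0) ≤
      |lam0 - lam1| / (2 * lam1) * frobNorm M0 +
        (|lam0 - lam1| + lam0 + lam1) / (2 * lam1) * ε :=
  relaxed_regularization_path_bound_general γ lam0 lam1 hγ hlam0 hlam1 T H M0star M1star M0 ε
    hM0star hopt0 hM1star hopt1 happrox
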